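/- Fix an integer p ≥ 1 and a real α > 0. Let F = {(x - a_i)^{e_i} : 1 ≤ i ≤ p} be a family of pairwise distinct shifted powers over ℂ with e_i ≥ αp for all i. Then the dimension of the ℂ-linear span of F is strictly greater than (1 + α - √(α² + 1))·p. In particular (α = 1): if e_i ≥ s for all i in a family of s pairwise distinct complex shifted powers, the span has dimension greater than (2 - √2)·s. -/

import Mathlib

/-!
Let `V` be the span, `n = dim V`, and `W` the Wronskian of a basis of `V` drawn from the family;
`W ≠ 0` since the basis is linearly independent and the characteristic is zero. Any two bases of
`V` have Wronskians that differ by a nonzero constant, so the order of `W` at a shift `z` may be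
computed with a basis containing all the powers of `X - z` in the family, each of which
contributes at least `e - (n - 1)`. Summing over `z`,
`∑ᵢ (eᵢ - (n - 1))₊ ≤ deg W ≤ ∑_{i ∈ T} eᵢ - n(n - 1)/2`, where `T` indexes the basis. The
`p - n` exponents outside `T` are at least `αp`, so `(p - n)αp ≤ p(n - 1) - n(n - 1)/2`, and this
quadratic inequality forces `n > (1 + α - √(α² + 1))p`.
-/

open Polynomial

namespace Polynomial

open Finset Submodule Module Function

section CommRing

variable {R : Type*} [CommRing R]

theorem linearIndependent_X_sub_C_pow (z : R) :
    LinearIndependent R fun k : ℕ => (X - C z) ^ k := by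
  have hX : LinearIndependent R fun k : ℕ => (X : R[X]) ^ k := by
    simpa [coe_basisMonomials, ← X_pow_eq_monomial] using (basisMonomials R).linearIndependent
  simpa [Function.comp_def, taylor_X_pow, sub_eq_add_neg] using
    hX.map' (taylor (-z)) (LinearMap.ker_eq_bot.mpr (taylor_injective _))

theorem sum_rootMultiplicity_le_natDegree [IsDomain R] (p : R[X]) (Z : Finset R) :
    ∑ z ∈ Z, p.rootMultiplicity z ≤ p.natDegree := by
  classical
  calc ∑ z ∈ Z, p.rootMultiplicity z = ∑ z ∈ Z, p.roots.count z := by simp only [count_roots]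
    _ ≤ ∑ z ∈ Z ∪ p.roots.toFinset, p.roots.count z := sum_le_sum_of_subset subset_union_left
    _ = Multiset.card p.roots := Multiset.sum_count_eq_card fun z hz => by simp [hz]
    _ ≤ p.natDegree := card_roots' p

theorem natDegree_iterate_derivative_add_le {p : R[X]} {k : ℕ} (h : derivative^[k] p ≠ 0) :
    (derivative^[k] p).natDegree + k ≤ p.natDegree := by
  have hk : k ≤ p.natDegree := by
    by_contra! hlt
    exact h (iterate_derivative_eq_zero hlt)
  have := natDegree_iterate_derivative p k
  omega

theorem not_isRoot_iterate_derivative_rootMultiplicity [IsDomain R] [CharZero R] {p : R[X]}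
    (hp : p ≠ 0) (t : R) : ¬(derivative^[p.rootMultiplicity t] p).IsRoot t := by
  rw [IsRoot, eval_iterate_derivative_rootMultiplicity, nsmul_eq_mul]
  exact mul_ne_zero (Nat.cast_ne_zero.mpr (Nat.factorial_ne_zero _))
    (eval_divByMonic_pow_rootMultiplicity_ne_zero t hp)

theorem eq_zero_of_sum_mul_iterate_derivative_eq_zero [IsDomain R] [CharZero R] {m : ℕ}
    {c : Fin (m + 1) → R[X]} {h : R[X]} {z : R} (hz : ¬(c (Fin.last m)).IsRoot z)
    (hc : ∑ j, c j * derivative^[j] h = 0) (hjet : ∀ j < m, (derivative^[j] h).IsRoot z) :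
    h = 0 := by
  by_contra hh
  set k := h.rootMultiplicity z
  have hmk : m ≤ k := by
    rcases m with _ | m
    · exact Nat.zero_le _
    · exact (lt_rootMultiplicity_iff_isRoot_iterate_derivative hh).mpr
        fun j hj => hjet j (Nat.lt_succ_of_le hj)
  have hlead : (X - C z) ^ (k - m + 1) ∣ c (Fin.last m) * derivative^[m] h := by
    rw [Fin.sum_univ_castSucc, Fin.val_last] at hc
    rw [eq_neg_of_add_eq_zero_right hc, dvd_neg]
    refine dvd_sum fun j _ => dvd_mul_of_dvd_right ?_ _
    refine (pow_dvd_pow _ ?_).trans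
      (pow_sub_dvd_iterate_derivative_of_pow_dvd _ (pow_rootMultiplicity_dvd h z))
    have := j.isLt
    simp only [Fin.val_castSucc]
    omega
  have hdvd : (X - C z) ^ (k - m + 1) ∣ derivative^[m] h :=
    (prime_X_sub_C z).pow_dvd_of_dvd_mul_left _ (by rwa [dvd_iff_isRoot]) hlead
  have := pow_sub_dvd_iterate_derivative_of_pow_dvd (k - m) hdvd
  rw [← Function.iterate_add_apply, Nat.sub_add_cancel hmk,
    show k - m + 1 - (k - m) = 1 by omega, pow_one, dvd_iff_isRoot] at this
  exact not_isRoot_iterate_derivative_rootMultiplicity hh z this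

noncomputable def wronskianMatrix {n : ℕ} (v : Fin n → R[X]) : Matrix (Fin n) (Fin n) R[X] :=
  .of fun i j => derivative^[j] (v i)

@[simp]
theorem wronskianMatrix_apply {n : ℕ} (v : Fin n → R[X]) (i j : Fin n) :
    wronskianMatrix v i j = derivative^[j] (v i) :=
  rfl

theorem pow_sum_dvd_det_wronskianMatrix {n : ℕ} (v : Fin n → R[X]) (q : R[X]) (c : Fin n → ℕ)
    (hc : ∀ i, q ^ c i ∣ v i) : q ^ ∑ i, (c i - (n - 1)) ∣ (wronskianMatrix v).det := by
  rw [Matrix.det_apply']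
  refine dvd_sum fun σ _ => dvd_mul_of_dvd_right ?_ _
  rw [← Equiv.sum_comp σ, ← prod_pow_eq_pow_sum]
  refine prod_dvd_prod_of_dvd _ _ fun i _ => ?_
  have := i.isLt
  exact (pow_dvd_pow _ (by omega)).trans
    (pow_sub_dvd_iterate_derivative_of_pow_dvd _ (hc (σ i)))

theorem natDegree_det_wronskianMatrix_add_choose_two_le {n : ℕ} {v : Fin n → R[X]}
    (hv : (wronskianMatrix v).det ≠ 0) :
    (wronskianMatrix v).det.natDegree + n.choose 2 ≤ ∑ i, (v i).natDegree := by
  have hchoose : ∑ j : Fin n, (j : ℕ) = n.choose 2 := by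
    rw [Fin.sum_univ_eq_sum_range (fun j => j), sum_range_id, Nat.choose_two_right]
  have hterm : ∀ σ : Equiv.Perm (Fin n), ∏ j, wronskianMatrix v (σ j) j ≠ 0 →
      (∏ j, wronskianMatrix v (σ j) j).natDegree + n.choose 2 ≤ ∑ i, (v i).natDegree := by
    intro σ hσ
    rw [← hchoose, ← Equiv.sum_comp σ (fun i => (v i).natDegree)]
    calc _ ≤ ∑ j : Fin n, (derivative^[j] (v (σ j))).natDegree + ∑ j : Fin n, (j : ℕ) := by
          gcongr; exact natDegree_prod_le _ _
      _ = ∑ j : Fin n, ((derivative^[j] (v (σ j))).natDegree + j) := sum_add_distrib.symm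
      _ ≤ _ := sum_le_sum fun j _ =>
          natDegree_iterate_derivative_add_le fun h0 => hσ (prod_eq_zero (mem_univ j) h0)
  rw [Matrix.det_apply'] at hv ⊢
  obtain ⟨σ₀, -, hσ₀⟩ := exists_ne_zero_of_sum_ne_zero hv
  have hle := (Nat.le_add_left _ _).trans (hterm σ₀ (right_ne_zero_of_mul hσ₀))
  suffices (∑ σ : Equiv.Perm (Fin n), Equiv.Perm.sign σ * ∏ j, wronskianMatrix v (σ j) j).natDegree
      ≤ ∑ i, (v i).natDegree - n.choose 2 by omega
  refine natDegree_sum_le_of_forall_le _ _ fun σ _ => ?_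
  by_cases hσ : ∏ j, wronskianMatrix v (σ j) j = 0
  · rw [hσ, mul_zero, natDegree_zero]
    exact Nat.zero_le _
  · have := hterm σ hσ
    calc _ ≤ _ := natDegree_mul_le
      _ ≤ _ := by rw [natDegree_intCast, zero_add]; omega

theorem exists_det_wronskianMatrix_snoc_eq {m : ℕ} (v : Fin m → R[X]) :
    ∃ c : Fin (m + 1) → R[X], c (Fin.last m) = (wronskianMatrix v).det ∧
      ∀ h, (wronskianMatrix (Fin.snoc v h : Fin (m + 1) → R[X])).det =
        ∑ j, c j * derivative^[j] h := by
  refine ⟨fun j => (-1) ^ (m + (j : ℕ)) *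
    (Matrix.of fun i k => derivative^[(j.succAbove k : ℕ)] (v i)).det, ?_, fun h => ?_⟩
  · simp [wronskianMatrix, ← two_mul]
  · rw [Matrix.det_succ_row _ (Fin.last m)]
    refine sum_congr rfl fun j _ => ?_
    simp only [Fin.val_last, wronskianMatrix_apply, Fin.snoc_last, Matrix.submatrix,
      Fin.succAbove_last, Fin.snoc_castSucc]
    ring

theorem det_wronskianMatrix_dvd_of_forall_mem_span {n : ℕ} {v w : Fin n → R[X]}
    (h : ∀ i, w i ∈ span R (Set.range v)) :
    (wronskianMatrix v).det ∣ (wronskianMatrix w).det := by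
  choose M hM using fun i => (mem_span_range_iff_exists_fun R).mp (h i)
  have : wronskianMatrix w = (Matrix.of M).map C * wronskianMatrix v := by
    ext i k
    simp [Matrix.mul_apply, ← hM, iterate_derivative_sum, smul_eq_C_mul]
  rw [this, Matrix.det_mul]
  exact dvd_mul_left _ _

end CommRing

section Field

variable {K : Type*} [Field K]

/-- If the Wronskian of `v` vanished, every `v i` would solve the linear ODE
`W(Fin.init v, h) = 0`, whose leading coefficient `W(Fin.init v)` is nonzero at some `z`; a
nontrivial combination of the `v i` with vanishing `m`-jet at `z` contradicts uniqueness. -/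
theorem det_wronskianMatrix_ne_zero [CharZero K] :
    ∀ {n : ℕ} {v : Fin n → K[X]}, LinearIndependent K v → (wronskianMatrix v).det ≠ 0
  | 0, v, _ => by simp [Matrix.det_isEmpty]
  | m + 1, v, hv => by
    intro hW
    have hinit : (wronskianMatrix (Fin.init v)).det ≠ 0 :=
      det_wronskianMatrix_ne_zero (hv.comp _ (Fin.castSucc_injective m))
    obtain ⟨c, hclast, hc⟩ := exists_det_wronskianMatrix_snoc_eq (Fin.init v)
    have hsol : ∀ i, ∑ j, c j * derivative^[j] (v i) = 0 := by
      intro i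
      rw [← hc]
      induction i using Fin.lastCases with
      | last => rwa [Fin.snoc_init_self]
      | cast i =>
        exact Matrix.det_zero_of_row_eq (Fin.castSucc_lt_last i).ne
          (by ext k; simp [Fin.init])
    obtain ⟨z, hz⟩ : ∃ z, ¬(c (Fin.last m)).IsRoot z := by
      by_contra! h
      exact hinit (hclast ▸ zero_of_eval_zero _ h)
    have hjets : ¬LinearIndependent K fun i (j : Fin m) => (derivative^[j] (v i)).eval z :=
      fun h => by simpa using h.fintype_card_le_finrank
    obtain ⟨g, hg, i₀, hi₀⟩ := Fintype.not_linearIndependent_iff.mp hjets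
    have hder : ∀ j, derivative^[j] (∑ i, g i • v i) = ∑ i, g i • derivative^[j] (v i) := by
      intro j
      simp only [iterate_derivative_sum, iterate_derivative_smul]
    refine hi₀ (Fintype.linearIndependent_iff.mp hv g ?_ i₀)
    refine eq_zero_of_sum_mul_iterate_derivative_eq_zero hz ?_ fun j hj => ?_
    · simp only [hder, mul_sum, mul_smul_comm]
      rw [sum_comm]
      simp [← smul_sum, hsol]
    · have := congrFun hg ⟨j, hj⟩
      simpa [hder, eval_finsetSum] using this

theorem exists_linearIndependent_comp_fin_extension {ι V : Type*} [Finite ι] [AddCommGroup V]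
    [Module K V] {f : ι → V} {S : Set ι} (hS : LinearIndepOn K f S) {n : ℕ}
    (hn : finrank K (span K (Set.range f)) = n) :
    ∃ σ : Fin n → ι, LinearIndependent K (f ∘ σ) ∧
      span K (Set.range (f ∘ σ)) = span K (Set.range f) ∧ S ⊆ Set.range σ := by
  obtain ⟨b, -, hSb, hspan, hb⟩ := exists_linearIndepOn_extension hS (Set.subset_univ S)
  have hbspan : span K (f '' b) = span K (Set.range f) :=
    le_antisymm (span_mono (Set.image_subset_range f b))
      (span_le.mpr (by simpa [Set.image_univ] using hspan))
  have : Fintype b := Fintype.ofFinite b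
  have hcard : Fintype.card b = n := by
    rw [← hn, ← hbspan, Set.image_eq_range]
    exact (finrank_span_eq_card hb).symm
  let e := Fintype.equivFinOfCardEq hcard
  refine ⟨fun j => (e.symm j : ι), hb.comp _ e.symm.injective, ?_,
    fun i hi => ⟨e ⟨i, hSb hi⟩, by simp⟩⟩
  rw [← hbspan, Set.image_eq_range]
  exact congrArg _ (e.symm.surjective.range_comp fun i : b => f i)

theorem pow_sum_dvd_det_wronskianMatrix_of_linearIndepOn {ι : Type*} [Fintype ι]
    {f : ι → K[X]} {n : ℕ} (hn : finrank K (span K (Set.range f)) = n) {β : Fin n → K[X]}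
    (hβ : span K (Set.range β) = span K (Set.range f)) (z : K) {S : Finset ι}
    (hS : LinearIndepOn K f S) :
    (X - C z) ^ ∑ i ∈ S, ((f i).rootMultiplicity z - (n - 1)) ∣ (wronskianMatrix β).det := by
  classical
  obtain ⟨σ, hσ, hσspan, hSσ⟩ := exists_linearIndependent_comp_fin_extension hS hn
  have hsum : ∑ i ∈ S, ((f i).rootMultiplicity z - (n - 1))
      ≤ ∑ j, ((f (σ j)).rootMultiplicity z - (n - 1)) := by
    rw [← sum_image (f := fun i => (f i).rootMultiplicity z - (n - 1)) (g := σ)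
      fun x _ y _ h => hσ.injective.of_comp h]
    exact sum_le_sum_of_subset fun i hi => by simpa using hSσ hi
  calc (X - C z) ^ ∑ i ∈ S, ((f i).rootMultiplicity z - (n - 1))
      ∣ (X - C z) ^ ∑ j, ((f (σ j)).rootMultiplicity z - (n - 1)) := pow_dvd_pow _ hsum
    _ ∣ (wronskianMatrix (f ∘ σ)).det :=
      pow_sum_dvd_det_wronskianMatrix _ _ _ fun j => pow_rootMultiplicity_dvd _ _
    _ ∣ (wronskianMatrix β).det :=
      det_wronskianMatrix_dvd_of_forall_mem_span fun i =>
        hσspan ▸ hβ ▸ subset_span (Set.mem_range_self i)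

end Field

end Polynomial

section ShiftedPowers

open Finset Submodule Module Function

theorem linearIndepOn_X_sub_C_pow_fiber {R ι : Type*} [CommRing R] {a : ι → R} {e : ι → ℕ}
    (hae : Injective fun i => (a i, e i)) (z : R) :
    LinearIndepOn R (fun i => (X - C (a i)) ^ e i) {i | a i = z} := by
  refine LinearIndepOn.congr (v := fun i => (X - C z) ^ e i)
    ((linearIndependent_X_sub_C_pow z).comp (fun i : {i | a i = z} => e i) ?_) ?_
  · exact fun i j h => Subtype.ext (hae (Prod.ext (i.2.trans j.2.symm) h))
  · intro i hi
    simp only [show a i = z from hi]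

variable {K ι : Type*} [Field K] [CharZero K] [Fintype ι] {a : ι → K} {e : ι → ℕ}

theorem sum_tsub_le_natDegree_det_wronskianMatrix (hae : Injective fun i => (a i, e i)) {n : ℕ}
    (hn : finrank K (span K (Set.range fun i => (X - C (a i)) ^ e i)) = n) {β : Fin n → K[X]}
    (hβli : LinearIndependent K β)
    (hβ : span K (Set.range β) = span K (Set.range fun i => (X - C (a i)) ^ e i)) :
    ∑ i, (e i - (n - 1)) ≤ (wronskianMatrix β).det.natDegree := by
  classical
  have hW := det_wronskianMatrix_ne_zero hβli
  have hfiber (z : K) :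
      ∑ i with a i = z, (e i - (n - 1)) ≤ (wronskianMatrix β).det.rootMultiplicity z := by
    have hdvd := pow_sum_dvd_det_wronskianMatrix_of_linearIndepOn hn hβ z
      (S := {i | a i = z}) (by simpa using linearIndepOn_X_sub_C_pow_fiber hae z)
    rw [le_rootMultiplicity_iff hW]
    convert hdvd using 2
    refine sum_congr rfl fun i hi => ?_
    rw [(mem_filter.mp hi).2, rootMultiplicity_X_sub_C_pow]
  calc ∑ i, (e i - (n - 1)) = ∑ z ∈ univ.image a, ∑ i with a i = z, (e i - (n - 1)) :=
        (sum_fiberwise_of_maps_to (fun i _ => mem_image_of_mem a (mem_univ i)) _).symm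
    _ ≤ ∑ z ∈ univ.image a, (wronskianMatrix β).det.rootMultiplicity z :=
        sum_le_sum fun z _ => hfiber z
    _ ≤ _ := sum_rootMultiplicity_le_natDegree _ _

theorem exists_card_eq_sum_compl_add_choose_two_le [DecidableEq ι]
    (hae : Injective fun i => (a i, e i)) {n : ℕ}
    (hn : finrank K (span K (Set.range fun i => (X - C (a i)) ^ e i)) = n) :
    ∃ T : Finset ι, T.card = n ∧ ∑ i ∈ Tᶜ, e i + n.choose 2 ≤ Fintype.card ι * (n - 1) := by
  obtain ⟨σ, hσ, hσspan, -⟩ :=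
    exists_linearIndependent_comp_fin_extension (linearIndepOn_empty K _) hn
  have hσinj : Injective σ := hσ.injective.of_comp
  refine ⟨univ.image σ, by rw [card_image_of_injective _ hσinj, card_univ, Fintype.card_fin], ?_⟩
  have hdeg := natDegree_det_wronskianMatrix_add_choose_two_le (det_wronskianMatrix_ne_zero hσ)
  have hlow := sum_tsub_le_natDegree_det_wronskianMatrix hae hn hσ hσspan
  have hdegσ :
      ∑ j, (((fun i => (X - C (a i)) ^ e i) ∘ σ) j).natDegree = ∑ i ∈ univ.image σ, e i := by
    rw [sum_image fun x _ y _ h => hσinj h]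
    simp
  have hsplit := sum_compl_add_sum (univ.image σ) e
  have htsub : ∑ i, e i ≤ ∑ i, (e i - (n - 1)) + Fintype.card ι * (n - 1) := by
    rw [← smul_eq_mul, ← card_univ, ← sum_const, ← sum_add_distrib]
    exact sum_le_sum fun i _ => le_tsub_add
  omega

end ShiftedPowers

/-- `c = 1 + α - √(α² + 1)` is the root of `c² - 2(1 + α)c + 2α` that kills the `p²` term of
`F(x) = p(x - 1) - x(x - 1)/2 - (p - x)αp` at `x = cp`, leaving `F(cp) = p(c/2 - 1) < 0`; and `F`
is increasing on `x ≤ cp`. -/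
theorem one_add_sub_sqrt_mul_lt {α p n : ℝ} (hp : 0 < p)
    (h : (p - n) * (α * p) ≤ p * (n - 1) - n * (n - 1) / 2) :
    (1 + α - √(α ^ 2 + 1)) * p < n := by
  set s := √(α ^ 2 + 1)
  have hs : s ^ 2 = α ^ 2 + 1 := Real.sq_sqrt (by positivity)
  have hs0 : 0 ≤ s := Real.sqrt_nonneg _
  by_contra! hn
  have hsα : α < s := by nlinarith
  have hQ : 0 ≤ p + 1 / 2 + α * p - (n + (1 + α - s) * p) / 2 := by nlinarith
  have hF : p * (n - 1) - n * (n - 1) / 2 - (p - n) * (α * p) = p * ((1 + α - s) / 2 - 1) +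
      (n - (1 + α - s) * p) * (p + 1 / 2 + α * p - (n + (1 + α - s) * p) / 2) := by
    linear_combination (-p ^ 2 / 2) * hs
  linarith [mul_nonpos_of_nonpos_of_nonneg (sub_nonpos.mpr hn) hQ,
    mul_neg_of_pos_of_neg hp (by linarith : (1 + α - s) / 2 - 1 < 0)]

theorem stmt19_general (p : ℕ) (hp : 1 ≤ p) (α : ℝ)
    (a : Fin p → ℂ) (e : Fin p → ℕ)
    (hdist : Function.Injective (fun i => (a i, e i)))
    (hbig : ∀ i, α * p ≤ (e i : ℝ)) :
    (1 + α - Real.sqrt (α ^ 2 + 1)) * p <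
      (Module.finrank ℂ
        (Submodule.span ℂ (Set.range fun i => (X - C (a i)) ^ (e i))) : ℝ) := by
  set n := Module.finrank ℂ (Submodule.span ℂ (Set.range fun i => (X - C (a i)) ^ (e i)))
  obtain ⟨T, hT, hsum⟩ := exists_card_eq_sum_compl_add_choose_two_le (n := n) hdist rfl
  have : Module.Finite ℂ (Submodule.span ℂ (Set.range fun i => (X - C (a i)) ^ (e i))) :=
    Module.Finite.span_of_finite ℂ (Set.finite_range _)
  have hn : 1 ≤ n := Submodule.one_le_finrank_iff.mpr fun hbot =>
    pow_ne_zero _ (X_sub_C_ne_zero _) (Submodule.span_eq_bot.mp hbot _ (Set.mem_range_self ⟨0, hp⟩))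
  have hnp : n ≤ p := hT ▸ (T.card_le_univ.trans_eq (Fintype.card_fin p))
  have hcompl : ((p : ℝ) - n) * (α * p) ≤ ∑ i ∈ Tᶜ, (e i : ℝ) := by
    have := Finset.card_nsmul_le_sum Tᶜ (fun i => (e i : ℝ)) (α * p) fun i _ => hbig i
    rwa [Finset.card_compl, Fintype.card_fin, hT, nsmul_eq_mul, Nat.cast_sub hnp] at this
  have hsumR : ∑ i ∈ Tᶜ, (e i : ℝ) + n * (n - 1) / 2 ≤ p * (n - 1) := by
    rw [Fintype.card_fin] at hsum
    have := (Nat.cast_le (α := ℝ)).mpr hsum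
    push_cast [Nat.cast_choose_two, Nat.cast_sub hn] at this
    exact this
  exact one_add_sub_sqrt_mul_lt (by positivity) (by linarith)

theorem stmt19 (p : ℕ) (hp : 1 ≤ p) (α : ℝ) (hα : 0 < α)
    (a : Fin p → ℂ) (e : Fin p → ℕ)
    (hdist : Function.Injective (fun i => (a i, e i)))
    (hbig : ∀ i, α * p ≤ (e i : ℝ)) :
    (1 + α - Real.sqrt (α ^ 2 + 1)) * p <
      (Module.finrank ℂ
        (Submodule.span ℂ (Set.range fun i => (X - C (a i)) ^ (e i))) : ℝ) :=
  stmt19_general p hp α a e hdist hbig
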